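/- If 0 < α < β < λ, ℓ < k(β,α), and γ = γ_ℓ(β,α), then ρ(β,α) = ρ(β,γ) ⌢ ρ(γ,α): the walk from β to α decomposes as the concatenation of the walk from β to γ followed by the walk from γ to α. -/

import Mathlib

/-!
Each `e δ` lies below `δ`, so the walk from `β` to `α` strictly decreases and stays `≥ α` until
it reaches `α`. A step from `δ` moves to the least point of `e δ` that is `≥` the target. Since
`γ = γ_ℓ(β,α)` is `≥ α` and below every earlier step of the walk, the walk from `β` to `γ` makes
exactly the same choices and arrives at `γ` at step `ℓ`; from `γ` on, the walk to `α` is the tail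
of the walk from `β`.
-/

noncomputable def walkStep (e : Ordinal → Set Ordinal) (α β : Ordinal) : Ordinal :=
  sInf {γ | γ ∈ e β ∧ α ≤ γ}

noncomputable def walk (e : Ordinal → Set Ordinal) (α β : Ordinal) : ℕ → Ordinal
  | 0 => β
  | n + 1 => walkStep e α (walk e α β n)

noncomputable def kLen (e : Ordinal → Set Ordinal) (α β : Ordinal) : ℕ :=
  sInf {k : ℕ | walk e α β k = α}

/-- `ρ(β,α) = ⟨γ_0(β,α), …, γ_{k(β,α)-1}(β,α)⟩`, the walk from `β` to `α`
(excluding the final value `α`); `ρ(α,α)` is the empty sequence. -/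
noncomputable def rho (e : Ordinal → Set Ordinal) (α β : Ordinal) : List Ordinal :=
  (List.range (kLen e α β)).map (walk e α β)

section Walk

variable {e : Ordinal → Set Ordinal} {α β γ δ : Ordinal}

theorem walkStep_spec (h : ∃ γ ∈ e δ, α ≤ γ) : walkStep e α δ ∈ e δ ∧ α ≤ walkStep e α δ :=
  csInf_mem (s := {γ | γ ∈ e δ ∧ α ≤ γ}) h

theorem walkStep_eq_zero (h : ¬∃ γ ∈ e δ, α ≤ γ) : walkStep e α δ = 0 := by
  have hempty : {γ | γ ∈ e δ ∧ α ≤ γ} = ∅ := Set.eq_empty_of_forall_notMem fun γ hγ => h ⟨γ, hγ⟩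
  rw [walkStep, hempty, Ordinal.sInf_empty]

theorem walkStep_eq_of_le (hαγ : α ≤ γ) (hmem : walkStep e α δ ∈ e δ)
    (hγ : γ ≤ walkStep e α δ) : walkStep e γ δ = walkStep e α δ :=
  le_antisymm (csInf_le (OrderBot.bddBelow _) ⟨hmem, hγ⟩)
    (csInf_le_csInf (OrderBot.bddBelow _) ⟨_, hmem, hγ⟩ fun _ hy => ⟨hy.1, hαγ.trans hy.2⟩)

theorem walk_succ (n : ℕ) : walk e α β (n + 1) = walkStep e α (walk e α β n) := rfl

theorem walk_add (m n : ℕ) : walk e α (walk e α β m) n = walk e α β (m + n) := by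
  induction n with
  | zero => rfl
  | succ n ih => rw [walk_succ, ih]; rfl

theorem walk_start_zero (he0 : e 0 = ∅) (n : ℕ) : walk e α 0 n = 0 := by
  induction n with
  | zero => rfl
  | succ n ih => rw [walk_succ, ih, walkStep_eq_zero (by simp [he0])]

theorem walk_kLen (h : 0 < kLen e α β) : walk e α β (kLen e α β) = α :=
  Nat.sInf_mem (Nat.nonempty_of_pos_sInf h)

theorem walk_ne_of_lt_kLen {n : ℕ} (h : n < kLen e α β) : walk e α β n ≠ α :=
  Nat.notMem_of_lt_sInf h

theorem kLen_eq_of_walk_eq {n : ℕ} (h : walk e α β n = α) (hmin : ∀ m < n, walk e α β m ≠ α) :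
    kLen e α β = n :=
  le_antisymm (Nat.sInf_le h) (le_csInf ⟨n, h⟩ fun m hm => not_lt.1 fun hlt => hmin m hlt hm)

/-- `sInf ∅ = 0` makes a step with nothing to choose from fall to `0`; as `e 0 = ∅` the walk then
stays at `0` and never reaches `α ≠ 0`. -/
theorem walk_succ_spec (he0 : e 0 = ∅) (hα : α ≠ 0) {n : ℕ} (hn : n < kLen e α β) :
    walk e α β (n + 1) ∈ e (walk e α β n) ∧ α ≤ walk e α β (n + 1) := by
  have hk : walk e α β (kLen e α β) = α := walk_kLen (Nat.zero_lt_of_lt hn)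
  refine walkStep_spec (by_contra fun hstuck => hα (hk.symm.trans ?_))
  rw [← Nat.add_sub_cancel' (Nat.succ_le_of_lt hn), ← walk_add,
    walk_succ, walkStep_eq_zero hstuck, walk_start_zero he0]

theorem le_walk (he0 : e 0 = ∅) (hα : α ≠ 0) (hαβ : α ≤ β) {n : ℕ} (hn : n ≤ kLen e α β) :
    α ≤ walk e α β n := by
  cases n with
  | zero => exact hαβ
  | succ n => exact (walk_succ_spec he0 hα hn).2

theorem walk_le_start (he0 : e 0 = ∅) (hα : α ≠ 0) (hdesc : ∀ δ ≤ β, ∀ γ ∈ e δ, γ < δ) {n : ℕ}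
    (hn : n ≤ kLen e α β) : walk e α β n ≤ β := by
  induction n with
  | zero => exact le_rfl
  | succ n ih =>
    have hle := ih (by omega)
    exact (hdesc _ hle _ (walk_succ_spec he0 hα hn).1).le.trans hle

theorem walk_strictAntiOn (he0 : e 0 = ∅) (hα : α ≠ 0) (hdesc : ∀ δ ≤ β, ∀ γ ∈ e δ, γ < δ) :
    StrictAntiOn (walk e α β) (Set.Iic (kLen e α β)) :=
  strictAntiOn_Iic_of_succ_lt fun _ hn =>
    hdesc _ (walk_le_start he0 hα hdesc hn.le) _ (walk_succ_spec he0 hα hn).1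

theorem rho_take (he0 : e 0 = ∅) (hα : α ≠ 0) (hαβ : α ≤ β)
    (hdesc : ∀ δ ≤ β, ∀ γ ∈ e δ, γ < δ) {l : ℕ} (hl : l ≤ kLen e α β) :
    rho e (walk e α β l) β = (rho e α β).take l := by
  have hanti := walk_strictAntiOn he0 hα hdesc
  have hagree : ∀ n ≤ l, walk e (walk e α β l) β n = walk e α β n := by
    intro n hn
    induction n with
    | zero => rfl
    | succ n ih =>
      rw [walk_succ, ih (by omega), walkStep_eq_of_le (le_walk he0 hα hαβ hl)
        (walk_succ_spec he0 hα (by omega)).1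
        (hanti.antitoneOn (Set.mem_Iic.2 (by omega)) (Set.mem_Iic.2 hl) hn)]
      rfl
  have hkLen : kLen e (walk e α β l) β = l :=
    kLen_eq_of_walk_eq (hagree l le_rfl) fun m hm => by
      rw [hagree m hm.le]
      exact (hanti (Set.mem_Iic.2 (by omega)) (Set.mem_Iic.2 hl) hm).ne'
  rw [rho, rho, hkLen, ← List.map_take, List.take_range, min_eq_left hl]
  exact List.map_congr_left fun n hn => hagree n (List.mem_range.1 hn).le

theorem rho_drop {l : ℕ} (hl : l < kLen e α β) :
    rho e α (walk e α β l) = (rho e α β).drop l := by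
  have hkLen : kLen e α (walk e α β l) = kLen e α β - l :=
    kLen_eq_of_walk_eq (by rw [walk_add, Nat.add_sub_cancel' hl.le, walk_kLen (by omega)])
      fun m hm => by rw [walk_add]; exact walk_ne_of_lt_kLen (by omega)
  apply List.ext_getElem
  · simp [rho, hkLen]
  · intro n
    simp [rho, walk_add]

end Walk

theorem lt_of_mem_ladder {lam : Ordinal} {e : Ordinal → Set Ordinal} (he0 : e 0 = ∅)
    (heS : ∀ γ, e (γ + 1) = {γ})
    (heL : ∀ δ < lam, Order.IsSuccLimit δ → e δ ⊆ Set.Iio δ) {δ γ : Ordinal} (hδ : δ < lam)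
    (hγ : γ ∈ e δ) : γ < δ := by
  rcases Ordinal.zero_or_succ_or_isSuccLimit δ with rfl | ⟨b, rfl⟩ | hlim
  · simp [he0] at hγ
  · rw [Order.succ_eq_add_one, heS, Set.mem_singleton_iff] at hγ
    exact hγ ▸ Order.lt_succ b
  · exact heL δ hδ hlim hγ

/-- if `0 < α < β < λ`, `ℓ < k(β,α)` and `γ = γ_ℓ(β,α)`, then
`ρ(β,α) = ρ(β,γ) ⌢ ρ(γ,α)`. -/
theorem stmt4 (lam β α : Ordinal) (e : Ordinal → Set Ordinal)
    (hbl : β < lam) (h0α : 0 < α) (hαβ : α < β)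
    (he0 : e 0 = ∅)
    (heS : ∀ γ, e (γ + 1) = {γ})
    (heL : ∀ β' < lam, Order.IsSuccLimit β' →
      e β' ⊆ Set.Iio β' ∧ (∀ x < β', ∃ y ∈ e β', x ≤ y) ∧
      ∀ x < β', (e β' ∩ Set.Iio x).Nonempty → sSup (e β' ∩ Set.Iio x) = x → x ∈ e β') :
    ∀ l, l < kLen e α β →
      rho e α β = rho e (walk e α β l) β ++ rho e α (walk e α β l) := by
  intro l hl
  have hdesc : ∀ δ ≤ β, ∀ γ ∈ e δ, γ < δ := fun δ hδ _ =>
    lt_of_mem_ladder he0 heS (fun δ hδ hlim => (heL δ hδ hlim).1) (hδ.trans_lt hbl)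
  rw [rho_take he0 h0α.ne' hαβ.le hdesc hl.le, rho_drop hl, List.take_append_drop]
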